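/- arXiv:q-alg/9709008 — 4 statements merged into one kernel-verified Lean document; each statement's English description precedes it below -/
import Mathlib

section
/- If two formal distributions a(z), b(z) with coefficients in a Lie algebra g satisfy (z-w)^N [a(z),b(w)] = 0 for some N ∈ ℤ₊, then [a(z),b(w)] = Σ_{j=0}^{N-1} (a_{(j)}b)(w) ∂_w^j δ(z-w)/j!, where (a_{(j)}b)(w) = Res_z (z-w)^j [a(z),b(w)] and δ(z-w) = z^{-1} Σ_{n∈ℤ} (z/w)^n. -/
open Finset

/- Formal distributions with coefficients in a Lie algebra `g` are encoded by their
coefficient families `a : ℤ → g`, where `a m` is the coefficient `a_{(m)}` of `z^{-m-1}`.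

Locality `(z-w)^N [a(z),b(w)] = 0` reads, on the coefficient of `z^{-m-1} w^{-n-1}`:
`∑_{k=0}^N (-1)^k C(N,k) [a_{m+N-k}, b_{n+k}] = 0`. -/

variable {g : Type*} [LieRing g] [LieAlgebra ℂ g]

/-- Coefficient of `w^{-m-1}` in the `j`-th product
`(a_{(j)}b)(w) = Res_z (z-w)^j [a(z), b(w)]`. -/
def nprod (a b : ℤ → g) (j : ℕ) (m : ℤ) : g :=
  ∑ k ∈ range (j + 1), ((-1 : ℤ) ^ k * (j.choose k : ℤ)) • ⁅a ((j : ℤ) - k), b (m + k)⁆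

/-- The generalized binomial coefficient `C(m, j)` for `m ∈ ℤ`, `j ∈ ℕ`. -/
def zchoose (m : ℤ) (j : ℕ) : ℤ :=
  if 0 ≤ m then ((m.toNat).choose j : ℤ)
  else (-1) ^ j * ((((j : ℤ) - m - 1).toNat).choose j : ℤ)

section aux

lemma zchoose_natCast (M j : ℕ) : zchoose (M : ℤ) j = (M.choose j : ℤ) := by
  simp [zchoose]

lemma zchoose_fwdDiff (j : ℕ) :
    fwdDiff (1:ℤ) (fun m => zchoose m (j+1)) = fun m => zchoose m j := by
  funext m
  simp only [fwdDiff, zchoose]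
  push_cast
  rcases lt_trichotomy m (-1) with h | rfl | h
  · have h1 : ¬ (0 ≤ m + 1) := by omega
    have h2 : ¬ (0 ≤ m) := by omega
    rw [if_neg h1, if_neg h2, if_neg h2]
    have e1 : ((j:ℤ) + 1 - (m + 1) - 1).toNat = ((j:ℤ) - m - 1).toNat := by omega
    have e2 : ((j:ℤ) + 1 - m - 1).toNat = ((j:ℤ) - m - 1).toNat + 1 := by omega
    rw [e1, e2, Nat.choose_succ_succ']
    push_cast
    ring
  · norm_num
    rw [pow_succ]; ring
  · have h1 : (0:ℤ) ≤ m + 1 := by omega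
    have h2 : (0:ℤ) ≤ m := by omega
    rw [if_pos h1, if_pos h2, if_pos h2]
    have e1 : (m + 1).toNat = m.toNat + 1 := by omega
    rw [e1, Nat.choose_succ_succ']
    push_cast
    ring

lemma fwdDiff_iter_zero_fun (r : ℕ) :
    (fwdDiff (1:ℤ))^[r] (fun _ : ℤ => (0:ℤ)) = fun _ => (0:ℤ) := by
  induction r with
  | zero => rfl
  | succ r IH =>
    rw [Function.iterate_succ_apply,
      show fwdDiff (1:ℤ) (fun _ : ℤ => (0:ℤ)) = fun _ => (0:ℤ) from funext fun y => by simp [fwdDiff],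
      IH]

lemma zchoose_iter_eq_zero {j N : ℕ} (h : j < N) :
    (fwdDiff (1:ℤ))^[N] (fun m => zchoose m j) = fun _ => (0:ℤ) := by
  have base : ∀ j : ℕ, (fwdDiff (1:ℤ))^[j+1] (fun m => zchoose m j) = fun _ => (0:ℤ) := by
    intro j
    induction j with
    | zero =>
      have : (fun m : ℤ => zchoose m 0) = fun _ => (1:ℤ) := by
        funext m; simp [zchoose]
      rw [Function.iterate_one, this]
      funext y; simp [fwdDiff]
    | succ j IH =>
      rw [Function.iterate_succ_apply, zchoose_fwdDiff, IH]
  obtain ⟨r, rfl⟩ : ∃ r, N = r + (j + 1) := ⟨N - (j+1), by omega⟩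
  rw [Function.iterate_add_apply, base, fwdDiff_iter_zero_fun]

lemma fwdDiff_iter_smul_const' {G : Type*} [AddCommGroup G] (f : ℤ → ℤ) (c : G) (n : ℕ) :
    (fwdDiff (1:ℤ))^[n] (fun y => f y • c) = fun y => ((fwdDiff (1:ℤ))^[n] f y) • c := by
  induction n generalizing f with
  | zero => simp
  | succ n IH =>
    rw [Function.iterate_succ_apply, Function.iterate_succ_apply]
    have : fwdDiff (1:ℤ) (fun y => f y • c) = fun y => (fwdDiff (1:ℤ) f y) • c := by
      funext y; simp [fwdDiff, sub_smul]
    rw [this, IH]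

lemma fwdDiff_iter_sub' {G : Type*} [AddCommGroup G] (f h : ℤ → G) (n : ℕ) :
    (fwdDiff (1:ℤ))^[n] (fun y => f y - h y)
      = fun y => ((fwdDiff (1:ℤ))^[n] f y) - ((fwdDiff (1:ℤ))^[n] h y) := by
  induction n generalizing f h with
  | zero => simp
  | succ n IH =>
    rw [Function.iterate_succ_apply, Function.iterate_succ_apply, Function.iterate_succ_apply]
    have : fwdDiff (1:ℤ) (fun y => f y - h y)
        = fun y => (fwdDiff (1:ℤ) f y) - (fwdDiff (1:ℤ) h y) := by
      funext y; simp only [fwdDiff]; abel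
    rw [this, IH]

omit [LieAlgebra ℂ g] in
lemma nprod_eq_fwdDiff (a b : ℤ → g) (j : ℕ) (t : ℤ) :
    nprod a b j (t - j) = (fwdDiff (1:ℤ))^[j] (fun x : ℤ => ⁅a x, b (t - x)⁆) 0 := by
  rw [fwdDiff_iter_eq_sum_shift, ← Finset.sum_range_reflect]
  unfold nprod
  refine Finset.sum_congr rfl fun k hk => ?_
  rw [Finset.mem_range] at hk
  have hk' : k ≤ j := by omega
  rw [show j + 1 - 1 - k = j - k from rfl, Nat.sub_sub_self hk', Nat.choose_symm hk']
  have e2 : ((0:ℤ) + (j - k : ℕ) • (1:ℤ)) = (j:ℤ) - k := by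
    simp only [nsmul_eq_mul, mul_one, zero_add]; omega
  rw [e2, show t - ((j:ℤ) - k) = t - j + k from by ring]

end aux

/-- If `(z-w)^N [a(z), b(w)] = 0`, then
`[a(z), b(w)] = ∑_{j=0}^{N-1} (a_{(j)}b)(w) ∂_w^j δ(z-w) / j!`, which on the coefficient of
`z^{-m-1} w^{-n-1}` reads `[a_m, b_n] = ∑_{j<N} C(m,j) (a_{(j)}b)_{m+n-j}`. -/
theorem decomposition_of_local_bracket (a b : ℤ → g) (N : ℕ)
    (hloc : ∀ m n : ℤ, ∑ k ∈ range (N + 1),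
      ((-1 : ℤ) ^ k * (N.choose k : ℤ)) • ⁅a (m + N - k), b (n + k)⁆ = 0) :
    ∀ m n : ℤ, ⁅a m, b n⁆ =
      ∑ j ∈ range N, zchoose m j • nprod a b j (m + n - j) := by
  intro m n
  set t : ℤ := m + n with ht
  set f : ℤ → g := fun x => ⁅a x, b (t - x)⁆ with hf
  set F : ℤ → g := fun x => f x - ∑ j ∈ range N, zchoose x j • nprod a b j (t - j) with hF
  -- the N-th difference of f vanishes
  have hΔf : ∀ y : ℤ, (fwdDiff (1:ℤ))^[N] f y = 0 := by
    intro y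
    rw [fwdDiff_iter_eq_sum_shift, ← Finset.sum_range_reflect]
    refine Eq.trans (Finset.sum_congr rfl fun k hk => ?_) (hloc y (t - y - N))
    rw [Finset.mem_range] at hk
    have hk' : k ≤ N := by omega
    rw [show N + 1 - 1 - k = N - k from rfl, Nat.sub_sub_self hk', Nat.choose_symm hk']
    have e2 : (y + (N - k : ℕ) • (1:ℤ)) = y + N - k := by
      simp only [nsmul_eq_mul, mul_one]; omega
    rw [e2]
    congr 1
    show ⁅a (y + (N:ℤ) - k), b (t - (y + (N:ℤ) - k))⁆ = _
    rw [show t - (y + (N:ℤ) - k) = t - y - N + k from by ring]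
  -- the N-th difference of F vanishes
  have hΔF : ∀ y : ℤ, (fwdDiff (1:ℤ))^[N] F y = 0 := by
    intro y
    rw [hF]
    rw [fwdDiff_iter_sub']
    beta_reduce
    rw [hΔf, zero_sub, neg_eq_zero]
    have hsum : (fun x : ℤ => ∑ j ∈ range N, zchoose x j • nprod a b j (t - j))
        = ∑ j ∈ range N, (fun x : ℤ => zchoose x j • nprod a b j (t - j)) := by
      funext x; rw [Finset.sum_apply]
    rw [hsum, fwdDiff_iter_finset_sum, Finset.sum_apply]
    refine Finset.sum_eq_zero fun j hj => ?_
    rw [Finset.mem_range] at hj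
    rw [fwdDiff_iter_smul_const', zchoose_iter_eq_zero hj]
    exact zero_smul ℤ _
  -- base window
  have hbase : ∀ M : ℕ, M < N → F (M:ℤ) = 0 := by
    intro M hM
    rw [hF, sub_eq_zero]
    have h1 : f ((0:ℤ) + M • (1:ℤ)) = ∑ k ∈ range (M+1), M.choose k • (fwdDiff (1:ℤ))^[k] f 0 :=
      shift_eq_sum_fwdDiff_iter 1 f M 0
    have e0 : ((0:ℤ) + M • (1:ℤ)) = (M:ℤ) := by simp
    rw [e0] at h1
    rw [h1]
    rw [← Finset.sum_subset (Finset.range_subset_range.mpr hM)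
      (fun j _ hj => by
        rw [Finset.mem_range, not_lt] at hj
        rw [zchoose_natCast, Nat.choose_eq_zero_of_lt (by omega), Int.natCast_zero, zero_smul])]
    refine Finset.sum_congr rfl fun k hk => ?_
    rw [zchoose_natCast, ← nprod_eq_fwdDiff a b k t, natCast_zsmul]
  -- upward induction
  have hup : ∀ i : ℕ, F (i:ℤ) = 0 := by
    intro i
    induction i using Nat.strong_induction_on with
    | _ i IH =>
      by_cases hi : i < N
      · exact hbase i hi
      · push_neg at hi
        have h0 := hΔF ((i:ℤ) - N)
        rw [fwdDiff_iter_eq_sum_shift, Finset.sum_range_succ] at h0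
        have hrest : ∑ k ∈ range N, ((-1:ℤ)^(N-k) * (N.choose k :ℤ)) • F ((i:ℤ) - N + k • (1:ℤ)) = 0 := by
          refine Finset.sum_eq_zero fun k hk => ?_
          rw [Finset.mem_range] at hk
          have e : ((i:ℤ) - N + k • (1:ℤ)) = ((i - N + k : ℕ) : ℤ) := by
            simp only [nsmul_eq_mul, mul_one]; omega
          rw [e, IH (i - N + k) (by omega), smul_zero]
        rw [hrest, zero_add, Nat.sub_self, pow_zero, Nat.choose_self, one_mul, Nat.cast_one,
          one_smul] at h0
        have e : ((i:ℤ) - N + N • (1:ℤ)) = (i:ℤ) := by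
          simp only [nsmul_eq_mul, mul_one]; omega
        rwa [e] at h0
  -- downward induction
  have hdown : ∀ i : ℕ, F (-(i:ℤ) - 1) = 0 := by
    intro i
    induction i using Nat.strong_induction_on with
    | _ i IH =>
      have h0 := hΔF (-(i:ℤ) - 1)
      rw [fwdDiff_iter_eq_sum_shift, Finset.sum_range_succ'] at h0
      have hrest : ∑ k ∈ range N, ((-1:ℤ)^(N-(k+1)) * (N.choose (k+1) :ℤ)) • F (-(i:ℤ) - 1 + (k+1) • (1:ℤ)) = 0 := by
        refine Finset.sum_eq_zero fun k hk => ?_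
        set z : ℤ := -(i:ℤ) - 1 + (k+1) • (1:ℤ) with hz
        have hz' : z = (k:ℤ) - i := by simp only [hz, nsmul_eq_mul, mul_one]; push_cast; ring
        rcases le_or_gt 0 z with hzn | hzn
        · have : z = ((z.toNat : ℕ) : ℤ) := by omega
          rw [this, hup z.toNat, smul_zero]
        · have hlt : (-z - 1).toNat < i := by omega
          have : z = -(((-z - 1).toNat : ℕ) : ℤ) - 1 := by omega
          rw [this, IH _ hlt, smul_zero]
      rw [hrest, zero_add] at h0
      simp only [nsmul_eq_mul, Nat.cast_zero, zero_mul, add_zero, Nat.sub_zero,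
        Nat.choose_zero_right, Nat.cast_one, mul_one] at h0
      rcases Nat.even_or_odd N with hN | hN
      · rwa [hN.neg_one_pow, one_smul] at h0
      · rw [hN.neg_one_pow, neg_smul, one_smul, neg_eq_zero] at h0
        exact h0
  -- conclude
  have hFm : F m = 0 := by
    rcases le_or_gt 0 m with hm | hm
    · have : m = ((m.toNat : ℕ) : ℤ) := by omega
      rw [this]; exact hup m.toNat
    · have : m = -(((-m - 1).toNat : ℕ) : ℤ) - 1 := by omega
      rw [this]; exact hdown (-m - 1).toNat
  rw [hF, sub_eq_zero] at hFm
  calc ⁅a m, b n⁆ = f m := by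
        show _ = ⁅a m, b (t - m)⁆
        rw [show t - m = n from by omega]
    _ = _ := hFm
end

section
/- Lemma on filtered modules: let L be a Lie algebra over ℂ with a distinguished element ∂ and a descending chain of subspaces L ⊇ L₀ ⊇ L₁ ⊇ … with [∂, Lₙ] = L_{n-1} for all n > 0. Let V be an L-module, Vₙ = {v ∈ V : Lₙ v = 0}, and suppose Vₙ ≠ 0 for n ≫ 0. Let N be the minimal index with V_N ≠ 0 and assume N > 0. Then any ℂ-linearly independent set v₁, v₂, … of vectors of V_N generating ℂ[∂]V_N as a ℂ[∂]-module is a basis of V_N over ℂ and a free set of generators of the ℂ[∂]-module ℂ[∂]V_N. -/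
/-!
Write `∂` for the action of `dl` on `V`. By the Leibniz rule `∂ᵏ` maps `V_N` into `V_{N+k}`, and
for `u ∈ V_N`, `z ∈ L_{N+k-1}` one has `[ad(∂)ᵏ z, u] = (-1)ᵏ [z, ∂ᵏ u]`. Suppose
`∑_{k ≤ K} ∂ᵏ w_k ∈ V_N` with all `w_k ∈ V_N` and `K > 0`. Pairing with `z ∈ L_{N+K-1}` kills every
term but the top one, and `ad(∂)ᴷ` maps `L_{N+K-1}` onto `L_{N-1}`, so `w_K ∈ V_{N-1} = 0`.
Hence an element of `ℂ[∂]V_N` that lies in `V_N` equals its constant term, which gives both claims.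
-/

open Polynomial LieModule

section PolynomialCombination

variable {R V ι : Type*} [CommSemiring R] [AddCommMonoid V] [Module R V]

theorem exists_sum_aeval_eq_of_mem_span {E : Module.End R V} {v : ι → V} {x : V}
    (hx : x ∈ Submodule.span R {y | ∃ (k : ℕ) (i : ι), y = (⇑E)^[k] (v i)}) :
    ∃ c : ι →₀ R[X], (c.sum fun i p => aeval E p (v i)) = x := by
  let T : (ι →₀ R[X]) →ₗ[R] V :=
    Finsupp.lsum R fun i => LinearMap.applyₗ (v i) ∘ₗ (aeval E).toLinearMap
  have hspan : Submodule.span R {y | ∃ (k : ℕ) (i : ι), y = (⇑E)^[k] (v i)} ≤ LinearMap.range T :=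
    Submodule.span_le.2 fun _ ⟨k, i, hy⟩ =>
      ⟨Finsupp.single i (X ^ k), by simp [T, hy, Module.End.pow_apply]⟩
  exact hspan hx

theorem exists_forall_natDegree_le (c : ι →₀ R[X]) : ∃ K, ∀ i, (c i).natDegree ≤ K := by
  classical
  refine ⟨c.support.sup fun i => (c i).natDegree, fun i => ?_⟩
  by_cases hi : i ∈ c.support
  · exact Finset.le_sup (f := fun i => (c i).natDegree) hi
  · simp [Finsupp.notMem_support_iff.1 hi]

theorem sum_aeval_eq_sum_pow_apply (E : Module.End R V) (v : ι → V) (c : ι →₀ R[X]) {K : ℕ}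
    (hK : ∀ i, (c i).natDegree ≤ K) :
    (c.sum fun i p => aeval E p (v i)) =
      ∑ k ∈ Finset.range (K + 1), (E ^ k) (c.sum fun i p => p.coeff k • v i) := by
  simp only [Finsupp.sum, map_sum, map_smul]
  rw [Finset.sum_comm]
  refine Finset.sum_congr rfl fun i _ => ?_
  rw [aeval_eq_sum_range' (Nat.lt_succ_of_le (hK i))]
  simp [LinearMap.sum_apply]

end PolynomialCombination

theorem LinearIndependent.eq_zero_of_forall_sum_coeff_smul_eq_zero {R V ι : Type*} [CommRing R]
    [AddCommGroup V] [Module R V] {v : ι → V} (hv : LinearIndependent R v) {c : ι →₀ R[X]}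
    (hc : ∀ k, (c.sum fun i p => p.coeff k • v i) = 0) : c = 0 := by
  classical
  ext i k
  by_cases hi : i ∈ c.support
  · exact linearIndependent_iff'.1 hv c.support (fun i => (c i).coeff k) (hc k) i hi
  · simp [Finsupp.notMem_support_iff.1 hi]

namespace FilteredLieModule

variable {R L V : Type*} [CommRing R] [LieRing L] [LieAlgebra R L]
  [AddCommGroup V] [Module R V] [LieRingModule L V] [LieModule R L V]

variable (V) in
def killedBy (S : Submodule R L) : Submodule R V :=
  ⨅ x ∈ S, (toEnd R L V x).ker

theorem mem_killedBy {S : Submodule R L} {v : V} : v ∈ killedBy V S ↔ ∀ x ∈ S, ⁅x, v⁆ = 0 := by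
  simp [killedBy]

theorem lie_toEnd_apply_of_mem_killedBy (d : L) {S : Submodule R L} {z : L} (hz : z ∈ S)
    {w : V} (hw : w ∈ killedBy V S) :
    ⁅z, toEnd R L V d w⁆ = -⁅LieAlgebra.ad R L d z, w⁆ := by
  rw [toEnd_apply_apply, leibniz_lie, mem_killedBy.1 hw z hz, lie_zero, add_zero, ← lie_skew,
    neg_lie, LieAlgebra.ad_apply]

variable {d : L} {C : ℕ → Submodule R L}

theorem map_ad_pow (hC : ∀ n, (C (n + 1)).map (LieAlgebra.ad R L d) = C n) (n k : ℕ) :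
    (C (n + k)).map (LieAlgebra.ad R L d ^ k) = C n := by
  induction k with
  | zero => simp [Module.End.one_eq_id]
  | succ k ih =>
    rw [pow_succ, Module.End.mul_eq_comp, Submodule.map_comp, ← add_assoc, hC, ih]

theorem toEnd_pow_apply_mem_killedBy (hanti : Antitone C)
    (hC : ∀ n, (C (n + 1)).map (LieAlgebra.ad R L d) ≤ C n) {N : ℕ} {u : V}
    (hu : u ∈ killedBy V (C N)) (k : ℕ) : (toEnd R L V d ^ k) u ∈ killedBy V (C (N + k)) := by
  induction k with
  | zero => simpa using hu
  | succ k ih =>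
    refine mem_killedBy.2 fun x hx => ?_
    rw [pow_succ', Module.End.mul_apply, lie_toEnd_apply_of_mem_killedBy d
      (hanti (Nat.le_succ _) hx) ih, mem_killedBy.1 ih _ (hC _ (Submodule.mem_map_of_mem hx)),
      neg_zero]

theorem lie_ad_pow_apply (hanti : Antitone C)
    (hC : ∀ n, (C (n + 1)).map (LieAlgebra.ad R L d) ≤ C n) {N : ℕ} {u : V}
    (hu : u ∈ killedBy V (C N)) (m : ℕ) {z : L} (hz : z ∈ C (N + m)) :
    ⁅(LieAlgebra.ad R L d ^ (m + 1)) z, u⁆ =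
      (-1 : R) ^ (m + 1) • ⁅z, (toEnd R L V d ^ (m + 1)) u⁆ := by
  induction m generalizing z with
  | zero =>
    rw [zero_add, pow_one, pow_one, pow_one, lie_toEnd_apply_of_mem_killedBy d hz hu, neg_one_smul,
      neg_neg]
  | succ m ih =>
    have hdz : LieAlgebra.ad R L d z ∈ C (N + m) := hC _ (Submodule.mem_map_of_mem hz)
    rw [pow_succ (LieAlgebra.ad R L d), Module.End.mul_apply, ih hdz,
      pow_succ' (toEnd R L V d) (m + 1), Module.End.mul_apply, lie_toEnd_apply_of_mem_killedBy d hz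
        (toEnd_pow_apply_mem_killedBy hanti hC hu (m + 1)), pow_succ (-1 : R) (m + 1), mul_smul,
      neg_one_smul, neg_neg]

theorem eq_zero_of_sum_range_add_two_mem_killedBy (hanti : Antitone C)
    (hC : ∀ n, (C (n + 1)).map (LieAlgebra.ad R L d) = C n) {N : ℕ}
    (hbot : killedBy V (C N) = ⊥) {K : ℕ} {w : ℕ → V} (hw : ∀ k, w k ∈ killedBy V (C (N + 1)))
    (hsum : ∑ k ∈ Finset.range (K + 2), (toEnd R L V d ^ k) (w k) ∈ killedBy V (C (N + 1))) :
    w (K + 1) = 0 := by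
  have hC' : ∀ n, (C (n + 1)).map (LieAlgebra.ad R L d) ≤ C n := fun n => (hC n).le
  suffices w (K + 1) ∈ killedBy V (C N) by rwa [hbot, Submodule.mem_bot] at this
  refine mem_killedBy.2 fun y hy => ?_
  -- `y = ad^(K+1) z` with `z` deep enough in the filtration to kill all lower terms of the sum.
  rw [← map_ad_pow hC N (K + 1)] at hy
  obtain ⟨z, hz, rfl⟩ := hy
  have hz' : z ∈ C (N + 1 + K) := by rwa [add_right_comm]
  have hlower : ∑ k ∈ Finset.range (K + 1), ⁅z, (toEnd R L V d ^ k) (w k)⁆ = 0 :=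
    Finset.sum_eq_zero fun k hk => mem_killedBy.1
      (toEnd_pow_apply_mem_killedBy hanti hC' (hw k) k) z
      (hanti (by simp at hk; omega) hz')
  have htop : ⁅z, (toEnd R L V d ^ (K + 1)) (w (K + 1))⁆ = 0 := by
    have h := mem_killedBy.1 hsum z (hanti (by omega) hz')
    rwa [lie_sum, Finset.sum_range_succ, hlower, zero_add] at h
  rw [lie_ad_pow_apply hanti hC' (hw (K + 1)) K (hanti (by omega) hz'), htop, smul_zero]

theorem eq_zero_of_sum_range_mem_killedBy (hanti : Antitone C)
    (hC : ∀ n, (C (n + 1)).map (LieAlgebra.ad R L d) = C n) {N : ℕ}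
    (hbot : killedBy V (C N) = ⊥) {w : ℕ → V} (hw : ∀ k, w k ∈ killedBy V (C (N + 1))) (K : ℕ)
    (hsum : ∑ k ∈ Finset.range (K + 1), (toEnd R L V d ^ k) (w k) ∈ killedBy V (C (N + 1)))
    {k : ℕ} (hk : 0 < k) (hkK : k ≤ K) : w k = 0 := by
  induction K with
  | zero => omega
  | succ K ih =>
    have htop := eq_zero_of_sum_range_add_two_mem_killedBy hanti hC hbot hw hsum
    rcases hkK.lt_or_eq with hlt | rfl
    · refine ih ?_ (by omega)
      simpa [Finset.sum_range_succ _ (K + 1), htop] using hsum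
    · exact htop

variable {ι : Type*} {v : ι → V}

theorem sum_coeff_smul_eq_zero_of_mem_killedBy (hanti : Antitone C)
    (hC : ∀ n, (C (n + 1)).map (LieAlgebra.ad R L d) = C n) {N : ℕ}
    (hbot : killedBy V (C N) = ⊥) (hv : ∀ i, v i ∈ killedBy V (C (N + 1))) {c : ι →₀ R[X]}
    (hc : (c.sum fun i p => aeval (toEnd R L V d) p (v i)) ∈ killedBy V (C (N + 1)))
    {k : ℕ} (hk : 0 < k) : (c.sum fun i p => p.coeff k • v i) = 0 := by
  obtain ⟨K, hK⟩ := exists_forall_natDegree_le c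
  rcases le_or_gt k K with hkK | hKk
  · rw [sum_aeval_eq_sum_pow_apply _ _ _ hK] at hc
    have hw (j : ℕ) : (c.sum fun i p => p.coeff j • v i) ∈ killedBy V (C (N + 1)) :=
      Submodule.finsuppSum_mem _ _ _ _ fun i _ => Submodule.smul_mem _ _ (hv i)
    exact eq_zero_of_sum_range_mem_killedBy hanti hC hbot hw K hc hk hkK
  · refine Finset.sum_eq_zero fun i _ => ?_
    simp only [coeff_eq_zero_of_natDegree_lt ((hK i).trans_lt hKk), zero_smul]

theorem sum_aeval_eq_sum_coeff_zero_smul_of_mem_killedBy (hanti : Antitone C)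
    (hC : ∀ n, (C (n + 1)).map (LieAlgebra.ad R L d) = C n) {N : ℕ}
    (hbot : killedBy V (C N) = ⊥) (hv : ∀ i, v i ∈ killedBy V (C (N + 1))) {c : ι →₀ R[X]}
    (hc : (c.sum fun i p => aeval (toEnd R L V d) p (v i)) ∈ killedBy V (C (N + 1))) :
    (c.sum fun i p => aeval (toEnd R L V d) p (v i)) = c.sum fun i p => p.coeff 0 • v i := by
  obtain ⟨K, hK⟩ := exists_forall_natDegree_le c
  rw [sum_aeval_eq_sum_pow_apply _ _ _ hK, Finset.sum_eq_single_of_mem 0 (by simp)]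
  · simp
  · intro k _ hk
    rw [sum_coeff_smul_eq_zero_of_mem_killedBy hanti hC hbot hv hc (Nat.pos_of_ne_zero hk),
      map_zero]

end FilteredLieModule

open FilteredLieModule in
theorem filtered_module_lemma_general
    {L : Type*} [LieRing L] [LieAlgebra ℂ L]
    {V : Type*} [AddCommGroup V] [Module ℂ V] [LieRingModule L V] [LieModule ℂ L V]
    (dl : L) (C : ℕ → Submodule ℂ L)
    (hdesc : ∀ n : ℕ, C (n + 1) ≤ C n)
    (hbr : ∀ n : ℕ, 0 < n → Submodule.map ((LieAlgebra.ad ℂ L dl) : L →ₗ[ℂ] L) (C n)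
      = C (n - 1))
    -- the subspaces Vₙ = {v ∈ V ∣ Lₙ v = 0}
    (Vn : ℕ → Submodule ℂ V)
    (hVn : ∀ n : ℕ, ∀ v : V, v ∈ Vn n ↔ ∀ x ∈ C n, ⁅x, v⁆ = 0)
    (N : ℕ) (hNpos : 0 < N) (hNmin : ∀ k < N, Vn k = ⊥)
    -- the endomorphism by which ∂ acts on V
    (E : Module.End ℂ V) (hE : ∀ v : V, E v = ⁅dl, v⁆)
    {ι : Type*} (v : ι → V) (hvmem : ∀ i, v i ∈ Vn N)
    (hli : LinearIndependent ℂ v)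
    (hgen : ∀ x ∈ Vn N, x ∈ Submodule.span ℂ {y | ∃ (k : ℕ) (i : ι), y = (⇑E)^[k] (v i)}) :
    -- `v` is a basis of `V_N` over ℂ …
    ((Vn N : Set V) ⊆ (Submodule.span ℂ (Set.range v) : Set V)) ∧
    -- … and a free set of generators of the `ℂ[∂]`-module `ℂ[∂]V_N`
    (∀ c : ι →₀ Polynomial ℂ,
      (c.sum fun i p => Polynomial.aeval E p (v i)) = 0 → c = 0) := by
  obtain rfl : Vn = fun n => killedBy V (C n) :=
    funext fun n => Submodule.ext fun u => (hVn n u).trans mem_killedBy.symm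
  obtain rfl : E = toEnd ℂ L V dl := LinearMap.ext hE
  beta_reduce at hvmem hgen hNmin ⊢
  obtain ⟨M, rfl⟩ : ∃ M, N = M + 1 := ⟨N - 1, by omega⟩
  have hanti : Antitone C := antitone_nat_of_succ_le hdesc
  have hC : ∀ n, (C (n + 1)).map (LieAlgebra.ad ℂ L dl) = C n := fun n => by
    simpa using hbr (n + 1) n.succ_pos
  have hbot : killedBy V (C M) = ⊥ := hNmin M (by omega)
  refine ⟨fun x hx => ?_, fun c hc => ?_⟩
  · obtain ⟨c, rfl⟩ := exists_sum_aeval_eq_of_mem_span (hgen x hx)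
    rw [SetLike.mem_coe, sum_aeval_eq_sum_coeff_zero_smul_of_mem_killedBy hanti hC hbot hvmem hx]
    exact Submodule.finsuppSum_mem _ _ _ _ fun i _ =>
      Submodule.smul_mem _ _ (Submodule.subset_span ⟨i, rfl⟩)
  · have hc' : (c.sum fun i p => aeval (toEnd ℂ L V dl) p (v i)) ∈ killedBy V (C (M + 1)) := by
      rw [hc]; exact zero_mem _
    refine hli.eq_zero_of_forall_sum_coeff_smul_eq_zero fun k => ?_
    rcases k.eq_zero_or_pos with rfl | hk
    · rw [← sum_aeval_eq_sum_coeff_zero_smul_of_mem_killedBy hanti hC hbot hvmem hc', hc]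
    · exact sum_coeff_smul_eq_zero_of_mem_killedBy hanti hC hbot hvmem hc' hk

/-- Key lemma on filtered modules: let `L` be a Lie algebra over ℂ with a distinguished
element `∂` and a descending chain of subspaces `L ⊇ L₀ ⊇ L₁ ⊇ …` with `[∂, Lₙ] = L_{n-1}`
for `n > 0`. Let `V` be an `L`-module, `Vₙ = {v : Lₙ v = 0}`, suppose `Vₙ ≠ 0` for `n ≫ 0`,
and let `N > 0` be minimal with `V_N ≠ 0`. Then any ℂ-linearly independent family of vectors
of `V_N` generating `ℂ[∂]V_N` as a `ℂ[∂]`-module is a basis of `V_N` over ℂ and a free set of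
generators of the `ℂ[∂]`-module `ℂ[∂]V_N`. -/
theorem filtered_module_lemma
    {L : Type*} [LieRing L] [LieAlgebra ℂ L]
    {V : Type*} [AddCommGroup V] [Module ℂ V] [LieRingModule L V] [LieModule ℂ L V]
    (dl : L) (C : ℕ → Submodule ℂ L)
    (hdesc : ∀ n : ℕ, C (n + 1) ≤ C n)
    (hbr : ∀ n : ℕ, 0 < n → Submodule.map ((LieAlgebra.ad ℂ L dl) : L →ₗ[ℂ] L) (C n)
      = C (n - 1))
    -- the subspaces Vₙ = {v ∈ V ∣ Lₙ v = 0}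
    (Vn : ℕ → Submodule ℂ V)
    (hVn : ∀ n : ℕ, ∀ v : V, v ∈ Vn n ↔ ∀ x ∈ C n, ⁅x, v⁆ = 0)
    (hev : ∃ n₀ : ℕ, ∀ n ≥ n₀, Vn n ≠ ⊥)
    (N : ℕ) (hNpos : 0 < N) (hN : Vn N ≠ ⊥) (hNmin : ∀ k < N, Vn k = ⊥)
    -- the endomorphism by which ∂ acts on V
    (E : Module.End ℂ V) (hE : ∀ v : V, E v = ⁅dl, v⁆)
    {ι : Type*} (v : ι → V) (hvmem : ∀ i, v i ∈ Vn N)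
    (hli : LinearIndependent ℂ v)
    (hgen : ∀ x ∈ Vn N, x ∈ Submodule.span ℂ {y | ∃ (k : ℕ) (i : ι), y = (⇑E)^[k] (v i)}) :
    -- `v` is a basis of `V_N` over ℂ …
    ((Vn N : Set V) ⊆ (Submodule.span ℂ (Set.range v) : Set V)) ∧
    -- … and a free set of generators of the `ℂ[∂]`-module `ℂ[∂]V_N`
    (∀ c : ι →₀ Polynomial ℂ,
      (c.sum fun i p => Polynomial.aeval E p (v i)) = 0 → c = 0) :=
  filtered_module_lemma_general dl C hdesc hbr Vn hVn N hNpos hNmin E hE v hvmem hli hgen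
end

section
/- For Δ, α ∈ ℂ, the span of vectors v_{(n)}, n ∈ ℤ, with the action L_m v_{(n)} = ((Δ-1)(m+1) - n) v_{(m+n)} + α v_{(m+n+1)} defines a representation of the centerless Virasoro algebra, i.e. [L_m, L_k] v_{(n)} = (m-k) L_{m+k} v_{(n)} for all m, k, n ∈ ℤ. -/
/- `V` is the ℂ-vector space with basis `{v_{(n)}}_{n ∈ ℤ}`, realized as `ℤ →₀ ℂ`. -/

/-- The operator `L_m` acting by
`L_m v_{(n)} = ((Δ-1)(m+1) - n) v_{(m+n)} + α v_{(m+n+1)}`. -/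
noncomputable def lop (Δ α : ℂ) (m : ℤ) : (ℤ →₀ ℂ) →ₗ[ℂ] (ℤ →₀ ℂ) :=
  Finsupp.lsum ℂ fun n : ℤ =>
    LinearMap.toSpanSingleton ℂ (ℤ →₀ ℂ)
      (((Δ - 1) * ((m : ℂ) + 1) - (n : ℂ)) • Finsupp.single (m + n) (1 : ℂ)
        + α • Finsupp.single (m + n + 1) (1 : ℂ))

lemma lop_single_one (Δ α : ℂ) (m n : ℤ) :
    lop Δ α m (Finsupp.single n 1)
      = ((Δ - 1) * ((m : ℂ) + 1) - n) • Finsupp.single (m + n) 1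
        + α • Finsupp.single (m + n + 1) 1 := by
  rw [lop, Finsupp.lsum_single, LinearMap.toSpanSingleton_apply, one_smul]

theorem lop_comp_sub_lop_comp (Δ α : ℂ) (m k : ℤ) :
    lop Δ α m ∘ₗ lop Δ α k - lop Δ α k ∘ₗ lop Δ α m = ((m : ℂ) - k) • lop Δ α (m + k) := by
  refine Finsupp.lhom_ext' fun n => LinearMap.ext_ring ?_
  simp only [LinearMap.sub_apply, LinearMap.comp_apply, LinearMap.smul_apply,
    Finsupp.lsingle_apply, lop_single_one, map_add, map_smul]
  simp only [← add_assoc, add_comm k m]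
  push_cast
  module

/-- The operators `L_m` define a representation of the centerless Virasoro algebra:
`[L_m, L_k] = (m - k) L_{m+k}`. -/
theorem lop_virasoro_rep (Δ α : ℂ) (m k : ℤ) (f : ℤ →₀ ℂ) :
    lop Δ α m (lop Δ α k f) - lop Δ α k (lop Δ α m f)
      = ((m : ℂ) - (k : ℂ)) • lop Δ α (m + k) f :=
  LinearMap.congr_fun (lop_comp_sub_lop_comp Δ α m k) f
end

section
/- Let U be a finite-dimensional ℂ-vector space, π a representation of the Lie algebra Vir_{≥0} = span{L_j : j ≥ 0} (with [L_i,L_j] = (i-j)L_{i+j}) on U, and A ∈ End(U) commuting with all π(L_j). Then ℂ[∂] ⊗ U with L_{(0)}u = (∂ + A)u and L_{(j)}u = π(L_{j-1})u for j ≥ 1, u ∈ U (extended by (M2)), is a module over the Virasoro conformal algebra, i.e. satisfies (M0)-(M2). -/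
open Finset

/-- A conformal algebra over ℂ: a ℂ[∂]-module (a ℂ-module together with the action `D` of ∂)
with ℂ-bilinear `n`-th products `mul n` for `n ∈ ℤ₊`, satisfying axioms (C0)-(C3).
Here, by convention, `mul (n-1)` for `n = 0` occurs only with coefficient `n = 0`. -/
structure ConformalAlgebra (R : Type*) [AddCommGroup R] [Module ℂ R] where
  /-- the action of `∂` -/
  D : R →ₗ[ℂ] R
  /-- the `n`-th products `a_{(n)} b` -/
  mul : ℕ → R →ₗ[ℂ] R →ₗ[ℂ] R
  /-- (C0) `a_{(n)} b = 0` for `n ≫ 0` -/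
  c0 : ∀ a b : R, ∃ N : ℕ, ∀ n ≥ N, mul n a b = 0
  /-- (C1) `(∂a)_{(n)} b = -n a_{(n-1)} b` -/
  c1 : ∀ (n : ℕ) (a b : R), mul n (D a) b = -(n : ℂ) • mul (n - 1) a b
  /-- (C2) `a_{(n)} b = ∑_{j≥0} (-1)^{j+n+1} (∂^j / j!) (b_{(n+j)} a)` (a finite sum by (C0)) -/
  c2 : ∀ (n : ℕ) (a b : R) (N : ℕ), (∀ j ≥ N, mul (n + j) b a = 0) →
    mul n a b = ∑ j ∈ range N,
      ((-1 : ℂ) ^ (j + n + 1) * ((j.factorial : ℂ))⁻¹) • (⇑D)^[j] (mul (n + j) b a)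
  /-- (C3) the conformal Jacobi identity -/
  c3 : ∀ (m n : ℕ) (a b c : R),
    mul m a (mul n b c) = (∑ j ∈ range (m + 1), ((m.choose j : ℂ)) •
      mul (m + n - j) (mul j a b) c) + mul n b (mul m a c)

variable {R : Type*} [AddCommGroup R] [Module ℂ R]

/-- A module over a conformal algebra `S` on `R`: a `ℂ[∂]`-module `M` (with `∂` acting by
`DM`) together with ℂ-bilinear actions `act n`, `n ∈ ℤ₊`, satisfying (M0)-(M2). -/
structure ConformalModule (S : ConformalAlgebra R) (M : Type*)
    [AddCommGroup M] [Module ℂ M] where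
  /-- the action of `∂` on `M` -/
  DM : M →ₗ[ℂ] M
  /-- the `n`-th actions `a_{(n)}^M` -/
  act : ℕ → R →ₗ[ℂ] M →ₗ[ℂ] M
  /-- (M0) `a_{(n)}^M v = 0` for `n ≫ 0` -/
  m0 : ∀ (a : R) (v : M), ∃ N : ℕ, ∀ n ≥ N, act n a v = 0
  /-- (M1) `[a_{(m)}^M, b_{(n)}^M] = ∑_j C(m,j) (a_{(j)}b)_{(m+n-j)}^M` -/
  m1 : ∀ (m n : ℕ) (a b : R) (v : M),
    act m a (act n b v) - act n b (act m a v)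
      = ∑ j ∈ range (m + 1), ((m.choose j : ℂ)) • act (m + n - j) (S.mul j a b) v
  /-- (M2) `(∂a)_{(n)}^M = -n a_{(n-1)}^M` -/
  m2a : ∀ (n : ℕ) (a : R) (v : M), act n (S.D a) v = -(n : ℂ) • act (n - 1) a v
  /-- (M2) `[∂, a_{(n)}^M] = -n a_{(n-1)}^M` -/
  m2b : ∀ (n : ℕ) (a : R) (v : M),
    DM (act n a v) - act n a (DM v) = -(n : ℂ) • act (n - 1) a v

/- The Virasoro conformal algebra `ℂ[∂]L` is realized on `ℕ →₀ ℂ` with `∂` the shift and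
`L = Finsupp.single 0 1`; the module `ℂ[∂] ⊗ U` is realized as `ℕ →₀ U` similarly. -/

/-- The action of `∂` on `ℂ[∂] ⊗ U ≅ ℕ →₀ U`. -/
noncomputable def shiftD (U : Type*) [AddCommGroup U] [Module ℂ U] :
    (ℕ →₀ U) →ₗ[ℂ] (ℕ →₀ U) := Finsupp.lmapDomain U ℂ (· + 1)

/-- The generator `L` of the Virasoro conformal algebra. -/
noncomputable def virL : ℕ →₀ ℂ := Finsupp.single 0 1

/-!
On `ℂ[∂] ⊗ U` the action of `L_(n)` is forced by (M2), `L_(n) ∂ = ∂ L_(n) + n L_(n-1)`, once it is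
given on `U`; the action of `∂ᵖL` is then forced by (M2) as well. The Virasoro relation
`[L_(m), L_(n)] = (m - n) L_(m+n-1)` need only be checked on `U`, where it is the bracket of
`Vir_{≥0}` together with `[A, π] = 0`: the defect of the relation satisfies a homogeneous
recursion under `∂`. (M1) for arbitrary elements follows by sesquilinearity, using (C1) on the left
and, on the right, `a_(n) ∂b = ∂(a_(n) b) + n a_(n-1) b`, a consequence of (C1) and (C2).
(M0) holds because the nonzero `π(L_j)` are eigenvectors of `ad π(L_0)` with the distinct
eigenvalues `-j`, so in finite dimension only finitely many of them are nonzero.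
-/

open Nat in
theorem ConformalAlgebra.mul_D_right (S : ConformalAlgebra R) (n : ℕ) (a b : R) :
    S.mul n a (S.D b) = S.D (S.mul n a b) + (n : ℂ) • S.mul (n - 1) a b := by
  obtain ⟨N, hN⟩ := S.c0 b a
  have skew : S.mul n a (S.D b) = ∑ j ∈ range (N + 1),
      (-((n + j : ℕ) : ℂ) * ((-1) ^ (j + n + 1) * (j ! : ℂ)⁻¹)) •
        (⇑S.D)^[j] (S.mul (n + j - 1) b a) := by
    rw [S.c2 n a (S.D b) (N + 1) fun j hj => by rw [S.c1, hN _ (by omega), smul_zero]]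
    refine sum_congr rfl fun j _ => ?_
    rw [S.c1, ← Module.End.pow_apply, map_smul, Module.End.pow_apply, smul_smul, mul_comm]
  have lower : (n : ℂ) • S.mul (n - 1) a b = ∑ j ∈ range (N + 1),
      ((n : ℂ) * ((-1) ^ (j + n) * (j ! : ℂ)⁻¹)) • (⇑S.D)^[j] (S.mul (n + j - 1) b a) := by
    rcases n with _ | m
    · simp
    · rw [Nat.add_sub_cancel, S.c2 m a b (N + 1) fun j hj => hN _ (by omega), smul_sum]
      refine sum_congr rfl fun j _ => ?_
      rw [smul_smul, show m + 1 + j - 1 = m + j by omega, ← add_assoc]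
  have raised : S.D (S.mul n a b) = ∑ j ∈ range (N + 1),
      (-(j : ℂ) * ((-1) ^ (j + n + 1) * (j ! : ℂ)⁻¹)) •
        (⇑S.D)^[j] (S.mul (n + j - 1) b a) := by
    rw [sum_range_succ', S.c2 n a b N fun j hj => hN _ (by omega), map_sum]
    simp only [CharP.cast_eq_zero, neg_zero, zero_mul, zero_smul, add_zero]
    refine sum_congr rfl fun j _ => ?_
    rw [map_smul, ← Function.iterate_succ_apply' (⇑S.D), show n + (j + 1) - 1 = n + j by omega,
      factorial_succ]
    congr 1
    push_cast
    field_simp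
    ring
  rw [skew, lower, raised, ← sum_add_distrib]
  refine sum_congr rfl fun j _ => ?_
  rw [← add_smul]
  congr 1
  push_cast
  ring

theorem Module.End.eventually_eq_zero_of_commutator_eq_smul {K V : Type*} [Field K]
    [CharZero K] [AddCommGroup V] [Module K V] [FiniteDimensional K V] (π : ℕ → Module.End K V)
    (hπ : ∀ j, π 0 * π j - π j * π 0 = -(j : K) • π j) : ∃ J, ∀ j ≥ J, π j = 0 := by
  have hfin : {j | π j ≠ 0}.Finite := by
    by_contra hinf
    have := Set.infinite_coe_iff.mpr hinf
    refine Module.Finite.not_linearIndependent_of_infinite (R := K) _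
      (Module.End.eigenvectors_linearIndependent'
        (LinearMap.mulLeft K (π 0) - LinearMap.mulRight K (π 0))
        (fun j : {j | π j ≠ 0} => -(j : K)) (fun i j h => Subtype.ext (by simpa using h))
        (fun j => π j) fun j => ?_)
    exact Module.End.hasEigenvector_iff.mpr ⟨Module.End.mem_eigenspace_iff.mpr (hπ j), j.2⟩
  obtain ⟨J, hJ⟩ := hfin.bddAbove
  exact ⟨J + 1, fun j hj => by_contra fun h => absurd (hJ h) (by omega)⟩

theorem shiftD_single {U : Type*} [AddCommGroup U] [Module ℂ U] (k : ℕ) (u : U) :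
    shiftD U (Finsupp.single k u) = Finsupp.single (k + 1) u := by
  simp [shiftD, Finsupp.mapDomain_single]

namespace ConformalAlgebra

variable {M : Type*} [AddCommGroup M] [Module ℂ M] (S : ConformalAlgebra R)
  (act : ℕ → R →ₗ[ℂ] M →ₗ[ℂ] M)

def CommutatorFormula (a b : R) : Prop :=
  ∀ (m n : ℕ) (v : M), act m a (act n b v) - act n b (act m a v)
    = ∑ j ∈ range (m + 1), (m.choose j : ℂ) • act (m + n - j) (S.mul j a b) v

variable {S act}

namespace CommutatorFormula

theorem zero_left (b : R) : CommutatorFormula S act 0 b := by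
  intro m n v
  simp

theorem zero_right (a : R) : CommutatorFormula S act a 0 := by
  intro m n v
  simp

theorem add_left {a a' b : R} (h : CommutatorFormula S act a b)
    (h' : CommutatorFormula S act a' b) : CommutatorFormula S act (a + a') b := by
  intro m n v
  simp only [map_add, LinearMap.add_apply, smul_add, sum_add_distrib, ← h m n v, ← h' m n v]
  abel

theorem add_right {a b b' : R} (h : CommutatorFormula S act a b)
    (h' : CommutatorFormula S act a b') : CommutatorFormula S act a (b + b') := by
  intro m n v
  simp only [map_add, LinearMap.add_apply, smul_add, sum_add_distrib, ← h m n v, ← h' m n v]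
  abel

theorem smul_left {a b : R} (c : ℂ) (h : CommutatorFormula S act a b) :
    CommutatorFormula S act (c • a) b := by
  intro m n v
  simp only [map_smul, LinearMap.smul_apply, ← smul_sub, h m n v, smul_sum, smul_comm c]

theorem smul_right {a b : R} (c : ℂ) (h : CommutatorFormula S act a b) :
    CommutatorFormula S act a (c • b) := by
  intro m n v
  simp only [map_smul, LinearMap.smul_apply, ← smul_sub, h m n v, smul_sum, smul_comm c]

section D

variable (hD : ∀ (n : ℕ) (a : R) (v : M), act n (S.D a) v = -(n : ℂ) • act (n - 1) a v)
include hD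

theorem D_left {a b : R} (h : CommutatorFormula S act a b) :
    CommutatorFormula S act (S.D a) b := by
  intro m n v
  rcases m with _ | m
  · simp [hD, S.c1]
  rw [hD, hD, map_smul, ← smul_sub, Nat.add_sub_cancel, h m n v, sum_range_succ' _ (m + 1),
    smul_sum]
  simp only [S.c1, CharP.cast_eq_zero, neg_zero, zero_smul, map_zero, LinearMap.zero_apply,
    smul_zero, add_zero]
  refine sum_congr rfl fun j _ => ?_
  rw [map_smul, LinearMap.smul_apply, smul_smul, smul_smul, Nat.add_sub_cancel,
    show m + 1 + n - (j + 1) = m + n - j by omega]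
  congr 1
  have := Nat.add_one_mul_choose_eq m j
  rw [← Nat.cast_inj (R := ℂ)] at this
  push_cast at this ⊢
  linear_combination -this

theorem D_right {a b : R} (h : CommutatorFormula S act a b) :
    CommutatorFormula S act a (S.D b) := by
  intro m n v
  have rhs : ∑ j ∈ range (m + 1), (m.choose j : ℂ) • act (m + n - j) (S.mul j a (S.D b)) v
      = -(n : ℂ) • ∑ j ∈ range (m + 1),
          (m.choose j : ℂ) • act (m + n - 1 - j) (S.mul j a b) v := by
    have reindex :
        ∑ j ∈ range (m + 1), ((m.choose j * j : ℕ) : ℂ) • act (m + n - j) (S.mul (j - 1) a b) v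
          = ∑ j ∈ range (m + 1),
              ((m.choose j * (m - j) : ℕ) : ℂ) • act (m + n - 1 - j) (S.mul j a b) v := by
      rw [sum_range_succ', sum_range_succ]
      simp only [mul_zero, Nat.sub_self, CharP.cast_eq_zero, zero_smul, add_zero]
      refine sum_congr rfl fun j _ => ?_
      rw [show m + n - (j + 1) = m + n - 1 - j by omega, Nat.add_sub_cancel,
        Nat.choose_succ_right_eq]
    calc _ = ∑ j ∈ range (m + 1), ((m.choose j : ℂ) * -((m + n - j : ℕ) : ℂ)) •
            act (m + n - 1 - j) (S.mul j a b) v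
          + ∑ j ∈ range (m + 1),
              ((m.choose j * j : ℕ) : ℂ) • act (m + n - j) (S.mul (j - 1) a b) v := by
          rw [← sum_add_distrib]
          refine sum_congr rfl fun j _ => ?_
          rw [mul_D_right, map_add, map_smul, LinearMap.add_apply, LinearMap.smul_apply, hD,
            smul_add, smul_smul, smul_smul, show m + n - j - 1 = m + n - 1 - j by omega]
          push_cast
          ring_nf
      _ = _ := by
          rw [reindex, ← sum_add_distrib, smul_sum]
          refine sum_congr rfl fun j hj => ?_
          rw [← add_smul, smul_smul]
          congr 1
          have : j ≤ m := Nat.lt_succ_iff.mp (mem_range.mp hj)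
          push_cast [this, show j ≤ m + n by omega]
          ring
  rw [rhs]
  rcases n with _ | n
  · simp [hD]
  rw [hD, hD, map_smul, ← smul_sub, Nat.add_sub_cancel, h m n v]
  rfl

end D

theorem of_virL {S : ConformalAlgebra (ℕ →₀ ℂ)} {act : ℕ → (ℕ →₀ ℂ) →ₗ[ℂ] M →ₗ[ℂ] M}
    (hD : ∀ (n : ℕ) (a : ℕ →₀ ℂ) (v : M), act n (S.D a) v = -(n : ℂ) • act (n - 1) a v)
    (hSD : S.D = shiftD ℂ) (h : CommutatorFormula S act virL virL) (a b : ℕ →₀ ℂ) :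
    CommutatorFormula S act a b := by
  have single_one : ∀ p, Finsupp.single p (1 : ℂ) = (⇑S.D)^[p] virL := by
    intro p
    induction p with
    | zero => rfl
    | succ p ih => rw [Function.iterate_succ_apply', ← ih, hSD, shiftD_single]
  have singles : ∀ p q, CommutatorFormula S act (Finsupp.single p 1) (Finsupp.single q 1) := by
    intro p q
    rw [single_one, single_one]
    induction p with
    | zero =>
      induction q with
      | zero => exact h
      | succ q ih => rw [Function.iterate_succ_apply']; exact ih.D_right hD
    | succ p ih => rw [Function.iterate_succ_apply']; exact ih.D_left hD
  induction a using Finsupp.induction_linear with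
  | zero => exact zero_left b
  | add a a' ha ha' => exact ha.add_left ha'
  | single p c =>
    induction b using Finsupp.induction_linear with
    | zero => exact zero_right _
    | add b b' hb hb' => exact hb.add_right hb'
    | single q c' =>
      rw [← mul_one c, ← smul_eq_mul, ← Finsupp.smul_single, ← mul_one c', ← smul_eq_mul,
        ← Finsupp.smul_single]
      exact ((singles p q).smul_right c').smul_left c

end CommutatorFormula

end ConformalAlgebra

theorem Nat.descFactorial_succ_eq_mul_pred (n k : ℕ) :
    n.descFactorial (k + 1) = n * (n - 1).descFactorial k := by
  cases n with
  | zero => simp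
  | succ n => exact Nat.succ_descFactorial_succ n k

namespace VirasoroModule

variable {U : Type*} [AddCommGroup U] [Module ℂ U] (g : ℕ → U →ₗ[ℂ] (ℕ →₀ U))

-- `g n u` is `L_(n) u` for `u ∈ U`, and `genActionPow g n k u` is `L_(n) (∂ᵏ u)`, obtained from
-- `L_(n) ∂ = ∂ L_(n) + n L_(n-1)`
noncomputable def genActionPow : ℕ → ℕ → U →ₗ[ℂ] (ℕ →₀ U)
  | n, 0 => g n
  | n, k + 1 => (shiftD U).comp (genActionPow n k) + (n : ℂ) • genActionPow (n - 1) k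

noncomputable def genAction (n : ℕ) : (ℕ →₀ U) →ₗ[ℂ] (ℕ →₀ U) :=
  Finsupp.lsum ℂ (genActionPow g n)

theorem genAction_single (n k : ℕ) (u : U) :
    genAction g n (Finsupp.single k u) = genActionPow g n k u :=
  Finsupp.lsum_single ℂ _ _ _

theorem genAction_single_zero (n : ℕ) (u : U) :
    genAction g n (Finsupp.single 0 u) = g n u :=
  genAction_single g n 0 u

theorem genAction_mul_shiftD (n : ℕ) :
    genAction g n * shiftD U = shiftD U * genAction g n + (n : ℂ) • genAction g (n - 1) :=
  Finsupp.lhom_ext fun k u => by simp [genAction_single, shiftD_single, genActionPow]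

theorem genAction_shiftD (n : ℕ) (x : ℕ →₀ U) :
    genAction g n (shiftD U x) = shiftD U (genAction g n x) + (n : ℂ) • genAction g (n - 1) x :=
  LinearMap.congr_fun (genAction_mul_shiftD g n) x

theorem shiftD_genAction_sub (n : ℕ) (x : ℕ →₀ U) :
    shiftD U (genAction g n x) - genAction g n (shiftD U x)
      = -(n : ℂ) • genAction g (n - 1) x := by
  rw [genAction_shiftD]
  module

theorem genAction_commutator
    (hg : ∀ (m n : ℕ) (u : U), genAction g m (g n u) - genAction g n (g m u)
      = ((m : ℂ) - n) • g (m + n - 1) u) (m n : ℕ) :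
    genAction g m * genAction g n - genAction g n * genAction g m
      = ((m : ℂ) - n) • genAction g (m + n - 1) := by
  set T := genAction g
  set C : ℕ → ℕ → Module.End ℂ (ℕ →₀ U) :=
    fun m n => T m * T n - T n * T m - ((m : ℂ) - n) • T (m + n - 1)
  have index_shift : ∀ m n : ℕ, (((m : ℂ) - n) * ((m + n - 1 : ℕ) : ℂ)) • T (m + n - 1 - 1)
      = ((m : ℂ) * (((m - 1 : ℕ) : ℂ) - n)) • T (m - 1 + n - 1)
        + ((n : ℂ) * (m - ((n - 1 : ℕ) : ℂ))) • T (m + (n - 1) - 1) := by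
    intro m n
    rcases m with _ | m <;> rcases n with _ | n
    · simp
    · simp only [Nat.zero_add, Nat.add_sub_cancel]; push_cast; module
    · simp only [Nat.add_zero, Nat.add_sub_cancel]; push_cast; module
    · rw [show m + 1 + (n + 1) - 1 - 1 = m + n by omega,
        show m + 1 - 1 + (n + 1) - 1 = m + n by omega,
        show m + 1 + (n + 1 - 1) - 1 = m + n by omega,
        show m + 1 + (n + 1) - 1 = m + n + 1 by omega]
      push_cast
      module
  have recursion : ∀ m n, C m n * shiftD U
      = shiftD U * C m n + (m : ℂ) • C (m - 1) n + (n : ℂ) • C m (n - 1) := by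
    intro m n
    have := index_shift m n
    simp only [C, sub_mul, mul_sub, smul_mul_assoc, mul_smul_comm, smul_sub]
    simp only [mul_assoc, genAction_mul_shiftD, T]
    simp only [← mul_assoc, genAction_mul_shiftD, mul_add, add_mul, mul_smul_comm, smul_mul_assoc]
    linear_combination (norm := module) -this
  have vanish : ∀ k m n (u : U), C m n (Finsupp.single k u) = 0 := by
    intro k
    induction k with
    | zero =>
      intro m n u
      simp only [C, LinearMap.sub_apply, LinearMap.smul_apply, Module.End.mul_apply, T,
        genAction_single_zero, hg, sub_self]
    | succ k ih =>
      intro m n u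
      rw [← shiftD_single, ← Module.End.mul_apply, recursion]
      simp [ih]
  exact sub_eq_zero.mp (Finsupp.lhom_ext fun k u => vanish k m n u)

theorem genActionPow_eq_zero {J : ℕ} (hJ : ∀ n ≥ J, g n = 0) (k : ℕ) :
    ∀ n ≥ k + J, genActionPow g n k = 0 := by
  induction k with
  | zero => simpa [genActionPow] using hJ
  | succ k ih =>
    intro n hn
    simp [genActionPow, ih n (by omega), ih (n - 1) (by omega)]

theorem genAction_eq_zero {J : ℕ} (hJ : ∀ n ≥ J, g n = 0) (x : ℕ →₀ U) :
    ∀ n ≥ x.support.sup id + J, genAction g n x = 0 := by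
  intro n hn
  rw [genAction, Finsupp.lsum_apply]
  refine sum_eq_zero fun k hk => ?_
  show genActionPow g n k (x k) = 0
  have hk : k ≤ x.support.sup id := le_sup (f := id) hk
  rw [genActionPow_eq_zero g hJ k n (by omega), LinearMap.zero_apply]

-- `(∂ᵖL)_(n) = (-1)ᵖ n(n-1)⋯(n-p+1) L_(n-p)`, forced by (M2)
noncomputable def act (n : ℕ) : (ℕ →₀ ℂ) →ₗ[ℂ] (ℕ →₀ U) →ₗ[ℂ] (ℕ →₀ U) :=
  Finsupp.lsum ℂ fun p => LinearMap.toSpanSingleton ℂ _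
    (((-1 : ℂ) ^ p * n.descFactorial p) • genAction g (n - p))

theorem act_single (n p : ℕ) (c : ℂ) :
    act g n (Finsupp.single p c)
      = (c * ((-1 : ℂ) ^ p * n.descFactorial p)) • genAction g (n - p) := by
  rw [act, Finsupp.lsum_single, LinearMap.toSpanSingleton_apply, smul_smul]

theorem act_virL (n : ℕ) : act g n virL = genAction g n := by
  simp [virL, act_single]

theorem act_shiftD (n : ℕ) (a : ℕ →₀ ℂ) :
    act g n (shiftD ℂ a) = -(n : ℂ) • act g (n - 1) a := by
  induction a using Finsupp.induction_linear with
  | zero => simp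
  | add a a' ha ha' => rw [map_add, map_add, ha, ha', map_add, smul_add]
  | single p c =>
    rw [shiftD_single, act_single, act_single, smul_smul, show n - (p + 1) = n - 1 - p by omega,
      Nat.descFactorial_succ_eq_mul_pred, pow_succ]
    congr 1
    push_cast
    ring

theorem shiftD_act_sub_act_shiftD (n : ℕ) (a : ℕ →₀ ℂ) (v : ℕ →₀ U) :
    shiftD U (act g n a v) - act g n a (shiftD U v) = -(n : ℂ) • act g (n - 1) a v := by
  induction a using Finsupp.induction_linear with
  | zero => simp
  | add a a' ha ha' =>
    simp only [map_add, LinearMap.add_apply, smul_add, ← ha, ← ha']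
    abel
  | single p c =>
    simp only [act_single, LinearMap.smul_apply, map_smul, ← smul_sub, shiftD_genAction_sub,
      smul_smul, show n - p - 1 = n - 1 - p by omega]
    congr 1
    have := (Nat.descFactorial_succ n p).symm.trans (Nat.descFactorial_succ_eq_mul_pred n p)
    rw [← Nat.cast_inj (R := ℂ)] at this
    push_cast at this
    linear_combination (-c * (-1) ^ p) * this

theorem act_eq_zero {J : ℕ} (hJ : ∀ n ≥ J, g n = 0) (a : ℕ →₀ ℂ) (v : ℕ →₀ U) :
    ∀ n ≥ a.support.sup id + v.support.sup id + J, act g n a v = 0 := by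
  intro n hn
  rw [act, Finsupp.lsum_apply, LinearMap.finsupp_sum_apply]
  refine sum_eq_zero fun p hp => ?_
  have hp : p ≤ a.support.sup id := le_sup (f := id) hp
  dsimp only
  rw [LinearMap.toSpanSingleton_apply, LinearMap.smul_apply, LinearMap.smul_apply,
    genAction_eq_zero g hJ v (n - p) (by omega), smul_zero, smul_zero]

theorem commutatorFormula_virL {S : ConformalAlgebra (ℕ →₀ ℂ)}
    (hSD : S.D = shiftD ℂ) (h0 : S.mul 0 virL virL = S.D virL)
    (h1 : S.mul 1 virL virL = (2 : ℂ) • virL) (hj : ∀ j > 1, S.mul j virL virL = 0)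
    (hg : ∀ m n : ℕ, genAction g m * genAction g n - genAction g n * genAction g m
      = ((m : ℂ) - n) • genAction g (m + n - 1)) :
    ConformalAlgebra.CommutatorFormula S (act g) virL virL := by
  intro m n v
  have h0' : ∀ k, act g k (S.mul 0 virL virL) = -(k : ℂ) • genAction g (k - 1) := by
    intro k
    rw [h0, hSD, act_shiftD, act_virL]
  rw [act_virL, act_virL, ← Module.End.mul_apply, ← Module.End.mul_apply, ← LinearMap.sub_apply,
    hg]
  rcases m with _ | m
  · simp [h0']
  rw [sum_range_succ', sum_range_succ',
    sum_eq_zero fun i _ => by rw [hj (i + 1 + 1) (by omega)]; simp, h1, h0', map_smul, act_virL]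
  simp only [Nat.choose_one_right, Nat.choose_zero_right, Nat.zero_add, Nat.sub_zero]
  push_cast
  simp only [LinearMap.smul_apply]
  module

noncomputable def virasoroGen (A : Module.End ℂ U) (π : ℕ → Module.End ℂ U) :
    ℕ → U →ₗ[ℂ] (ℕ →₀ U)
  | 0 => Finsupp.lsingle 1 + Finsupp.lsingle 0 ∘ₗ A
  | j + 1 => Finsupp.lsingle 0 ∘ₗ π j

variable {A : Module.End ℂ U} {π : ℕ → Module.End ℂ U}

theorem virasoroGen_zero_apply (u : U) :
    virasoroGen A π 0 u = Finsupp.single 1 u + Finsupp.single 0 (A u) := rfl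

theorem virasoroGen_succ_apply (j : ℕ) (u : U) :
    virasoroGen A π (j + 1) u = Finsupp.single 0 (π j u) := rfl

theorem virasoroGen_commutator
    (hπ : ∀ i j : ℕ, π i * π j - π j * π i = ((i : ℂ) - (j : ℂ)) • π (i + j))
    (hA : ∀ j : ℕ, A * π j = π j * A) (m n : ℕ) (u : U) :
    genAction (virasoroGen A π) m (virasoroGen A π n u)
      - genAction (virasoroGen A π) n (virasoroGen A π m u)
      = ((m : ℂ) - n) • virasoroGen A π (m + n - 1) u := by
  have with_zero : ∀ i u, genAction (virasoroGen A π) (i + 1) (virasoroGen A π 0 u)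
      - genAction (virasoroGen A π) 0 (virasoroGen A π (i + 1) u)
      = ((i : ℂ) + 1) • virasoroGen A π i u := by
    intro i u
    have hAu : A (π i u) = π i (A u) := LinearMap.congr_fun (hA i) u
    simp only [virasoroGen_zero_apply, virasoroGen_succ_apply, map_add, genAction_single,
      genActionPow, LinearMap.add_apply, LinearMap.comp_apply, LinearMap.smul_apply,
      shiftD_single, Nat.add_sub_cancel, Nat.zero_add, hAu]
    push_cast
    abel
  rcases m with _ | i <;> rcases n with _ | j
  · simp
  · rw [← neg_sub, with_zero]
    push_cast
    simp only [Nat.zero_add, Nat.add_sub_cancel]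
    module
  · rw [with_zero, Nat.cast_zero, sub_zero, Nat.add_zero, Nat.add_sub_cancel, Nat.cast_succ]
  · have hij := LinearMap.congr_fun (hπ i j) u
    simp only [LinearMap.sub_apply, LinearMap.smul_apply, Module.End.mul_apply] at hij
    simp only [virasoroGen_succ_apply, genAction_single_zero, ← Finsupp.single_sub, hij,
      show i + 1 + (j + 1) - 1 = i + j + 1 by omega, Finsupp.smul_single]
    push_cast
    ring_nf

end VirasoroModule

open VirasoroModule in
/-- Let `U` be a finite-dimensional ℂ-vector space, `π` a representation of
`Vir_{≥0} = span{L_j : j ≥ 0}` on `U`, and `A` an endomorphism of `U` commuting with all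
`π(L_j)`. Then `ℂ[∂] ⊗ U` with `L_{(0)}u = (∂ + A)u`, `L_{(j)}u = π(L_{j-1})u` for `j ≥ 1`
is a module over the Virasoro conformal algebra, i.e. satisfies (M0)-(M2). -/
theorem virasoro_conformal_module_exists
    (S : ConformalAlgebra (ℕ →₀ ℂ))
    (hSD : S.D = shiftD ℂ) (h0 : S.mul 0 virL virL = S.D virL)
    (h1 : S.mul 1 virL virL = (2 : ℂ) • virL) (hj : ∀ j > 1, S.mul j virL virL = 0)
    (U : Type*) [AddCommGroup U] [Module ℂ U] [FiniteDimensional ℂ U]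
    (π : ℕ → Module.End ℂ U)
    (hπ : ∀ i j : ℕ, π i * π j - π j * π i = ((i : ℂ) - (j : ℂ)) • π (i + j))
    (A : Module.End ℂ U) (hA : ∀ j : ℕ, A * π j = π j * A) :
    ∃ CM : ConformalModule S (ℕ →₀ U),
      CM.DM = shiftD U ∧
      (∀ u : U, CM.act 0 virL (Finsupp.single 0 u)
        = CM.DM (Finsupp.single 0 u) + Finsupp.single 0 (A u)) ∧
      ∀ j ≥ 1, ∀ u : U, CM.act j virL (Finsupp.single 0 u)
        = Finsupp.single 0 (π (j - 1) u) := by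
  set g := virasoroGen A π
  obtain ⟨J, hJ⟩ := Module.End.eventually_eq_zero_of_commutator_eq_smul π fun j => by
    simpa using hπ 0 j
  have g_eq_zero : ∀ n ≥ J + 1, g n = 0 := fun n hn => by
    obtain ⟨n, rfl⟩ : ∃ k, n = k + 1 := ⟨n - 1, by omega⟩
    simp [g, virasoroGen, hJ n (by omega)]
  have hD : ∀ (n : ℕ) (a : ℕ →₀ ℂ) (v : ℕ →₀ U),
      act g n (S.D a) v = -(n : ℂ) • act g (n - 1) a v := fun n a v => by
    rw [hSD, act_shiftD, LinearMap.smul_apply]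
  have generator : ConformalAlgebra.CommutatorFormula S (act g) virL virL :=
    commutatorFormula_virL g hSD h0 h1 hj fun m n =>
      genAction_commutator g (virasoroGen_commutator hπ hA) m n
  refine ⟨⟨shiftD U, act g, fun a v => ⟨_, act_eq_zero g g_eq_zero a v⟩,
    fun m n a b => generator.of_virL hD hSD a b m n, hD, shiftD_act_sub_act_shiftD g⟩,
    rfl, fun u => ?_, fun j hj u => ?_⟩
  · rw [act_virL, genAction_single_zero, virasoroGen_zero_apply]
    exact congrArg (· + _) (shiftD_single 0 u).symm
  · obtain ⟨j, rfl⟩ := Nat.exists_eq_add_of_le' hj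
    rw [act_virL, genAction_single_zero]
    rfl
end
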